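/- For time series of complexity at most m under the discrete Fréchet distance, every ball of radius r can be covered by at most 8^m balls of radius r/2; hence the doubling dimension of this (pseudo)metric space is O(m). -/

import Mathlib

open scoped Classical

/-- A single step of a traversal: increment first, second, or both coordinates by 1. -/
def IsStep (p q : ℕ × ℕ) : Prop :=
  (q.1 = p.1 + 1 ∧ q.2 = p.2) ∨ (q.1 = p.1 ∧ q.2 = p.2 + 1) ∨
    (q.1 = p.1 + 1 ∧ q.2 = p.2 + 1)

/-- A traversal of `[m] × [ℓ]`: a sequence of index pairs starting at `(1,1)`,
ending at `(m,ℓ)`, where consecutive pairs differ by a valid step. -/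
def IsTraversal (m ℓ : ℕ) (T : List (ℕ × ℕ)) : Prop :=
  T.head? = some (1, 1) ∧ T.getLast? = some (m, ℓ) ∧ T.Chain' IsStep

/-- The cost of a traversal: the maximum of `|x i - y j|` over pairs `(i,j)` in `T`. -/
noncomputable def travCost (x y : ℕ → ℝ) (T : List (ℕ × ℕ)) : ℝ :=
  (T.map (fun p => |x p.1 - y p.2|)).foldr max 0

/-- The discrete Fréchet distance between time series `x ∈ ℝ^m` and `y ∈ ℝ^ℓ`
(indexed by `1,…,m` and `1,…,ℓ` respectively). -/
noncomputable def dF (m ℓ : ℕ) (x y : ℕ → ℝ) : ℝ :=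
  sInf {c | ∃ T, IsTraversal m ℓ T ∧ travCost x y T = c}

/-!
Take a traversal of `x` and `y` of cost at most `r + ε`. Matching every vertex `y_j` to a partner
`x_{I j}` on it, with `I` monotone, the series `c_j = x_{I j} ± r/2`, the sign pointing towards
`y_j`, stays within `r/2 + ε` of `y` along the diagonal traversal. Such a `c` is determined by a
monotone self-map of `Fin m` (at most `4^m` of them, as they correspond to multisets) and `m`
signs. Since these `8^m` candidates do not depend on `ε`, one of them works for every `ε`.
-/

open Finset

lemma travCost_nonneg (x y : ℕ → ℝ) (T : List (ℕ × ℕ)) : 0 ≤ travCost x y T := by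
  induction T with
  | nil => exact le_rfl
  | cons _ _ ih => exact ih.trans (le_max_right _ _)

lemma abs_sub_le_travCost {x y : ℕ → ℝ} {T : List (ℕ × ℕ)} {p : ℕ × ℕ} (hp : p ∈ T) :
    |x p.1 - y p.2| ≤ travCost x y T :=
  List.le_max_of_le' 0 (List.mem_map_of_mem hp) le_rfl

lemma travCost_le {x y : ℕ → ℝ} {T : List (ℕ × ℕ)} {B : ℝ} (hB : 0 ≤ B)
    (h : ∀ p ∈ T, |x p.1 - y p.2| ≤ B) : travCost x y T ≤ B := by
  induction T with
  | nil => exact hB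
  | cons p T ih =>
    exact max_le (h p List.mem_cons_self) (ih fun q hq => h q (List.mem_cons_of_mem p hq))

lemma IsStep.le {p q : ℕ × ℕ} (h : IsStep p q) : p ≤ q := by
  rcases h with ⟨h1, h2⟩ | ⟨h1, h2⟩ | ⟨h1, h2⟩ <;> exact Prod.mk_le_mk.mpr ⟨by omega, by omega⟩

lemma IsStep.snd_le_succ {p q : ℕ × ℕ} (h : IsStep p q) : q.2 ≤ p.2 + 1 := by
  rcases h with ⟨-, h⟩ | ⟨-, h⟩ | ⟨-, h⟩ <;> omega

lemma List.mem_of_isChain_le_succ {l : List ℕ} (hl : l.IsChain fun a b => b ≤ a + 1)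
    {a b j : ℕ} (ha : l.head? = some a) (hb : l.getLast? = some b) (haj : a ≤ j)
    (hjb : j ≤ b) : j ∈ l := by
  induction l generalizing a with
  | nil => simp at ha
  | cons c l ih =>
    obtain rfl : c = a := by simpa using ha
    rcases haj.eq_or_lt with rfl | hlt
    · exact List.mem_cons_self
    cases l with
    | nil =>
      have : c = b := by simpa using hb
      omega
    | cons d l =>
      have ⟨hd, hl'⟩ := List.isChain_cons_cons.mp hl
      exact List.mem_cons_of_mem _ (ih hl' rfl (by simpa using hb) (by omega))

namespace IsTraversal

variable {m ℓ : ℕ} {T : List (ℕ × ℕ)}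

lemma pairwise_le (hT : IsTraversal m ℓ T) : T.Pairwise (· ≤ ·) :=
  List.isChain_iff_pairwise.mp (hT.2.2.imp fun _ _ h => h.le)

lemma mem_Icc (hT : IsTraversal m ℓ T) {p : ℕ × ℕ} (hp : p ∈ T) :
    (1, 1) ≤ p ∧ p ≤ (m, ℓ) := by
  have hle := hT.pairwise_le
  obtain ⟨hhead, hlast, -⟩ := hT
  constructor
  · simpa [(List.head_eq_iff_head?_eq_some _).mpr hhead] using hle.rel_head hp
  · simpa [(List.getLast_eq_iff_getLast?_eq_some _).mpr hlast] using hle.rel_getLast hp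

lemma exists_mem_of_snd (hT : IsTraversal m ℓ T) {j : ℕ} (hj : j ∈ Set.Icc 1 ℓ) :
    ∃ i, (i, j) ∈ T := by
  obtain ⟨hhead, hlast, hchain⟩ := hT
  have hj' : j ∈ T.map Prod.snd :=
    List.mem_of_isChain_le_succ
      ((List.isChain_map _).mpr (hchain.imp fun _ _ h => h.snd_le_succ))
      (by simp [hhead]) (by simp [List.getLast?_map, hlast]) hj.1 hj.2
  obtain ⟨⟨i, j⟩, hp, rfl⟩ := List.mem_map.mp hj'
  exact ⟨i, hp⟩

/-- Any choice of a partner of each `j` works: members of a traversal are comparable. -/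
lemma exists_monotoneOn_matching (hT : IsTraversal m ℓ T) :
    ∃ I : ℕ → ℕ, MonotoneOn I (Set.Icc 1 ℓ) ∧ ∀ j ∈ Set.Icc 1 ℓ, (I j, j) ∈ T := by
  choose! I hI using fun j (hj : j ∈ Set.Icc 1 ℓ) => hT.exists_mem_of_snd hj
  refine ⟨I, fun j hj j' hj' hjj' => ?_, hI⟩
  rcases eq_or_ne (I j, j) (I j', j') with h | h
  · exact (Prod.mk.inj h).1.le
  have : Std.Symm fun p q : ℕ × ℕ => p ≤ q ∨ q ≤ p := ⟨fun _ _ => Or.symm⟩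
  obtain h' | h' := (hT.pairwise_le.imp (S := fun p q => p ≤ q ∨ q ≤ p) Or.inl).forall
    (hI j hj) (hI j' hj') h
  · exact h'.1
  · obtain rfl : j = j' := le_antisymm hjj' h'.2
    exact le_rfl

end IsTraversal

def diagTraversal (a b : ℕ) : List (ℕ × ℕ) :=
  (List.range (max a b)).map fun i => (min (i + 1) a, min (i + 1) b)

lemma isTraversal_diagTraversal {a b : ℕ} (ha : 1 ≤ a) (hb : 1 ≤ b) :
    IsTraversal a b (diagTraversal a b) := by
  obtain ⟨n, hn⟩ : ∃ n, max a b = n + 1 := ⟨max a b - 1, by omega⟩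
  refine ⟨?_, ?_, ?_⟩
  · simp only [diagTraversal, hn, List.range_succ_eq_map, List.map_cons, List.head?_cons,
      Option.some.injEq, Prod.mk.injEq]
    omega
  · simp only [diagTraversal, hn, List.range_succ, List.map_append, List.map_singleton,
      List.getLast?_concat, Option.some.injEq, Prod.mk.injEq]
    omega
  · rw [List.Chain', diagTraversal, hn, List.isChain_map, List.isChain_range_succ]
    intro i _
    simp only [IsStep]
    omega

section dF

variable {m ℓ : ℕ} {x y : ℕ → ℝ}

lemma dF_le_travCost {T : List (ℕ × ℕ)} (hT : IsTraversal m ℓ T) :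
    dF m ℓ x y ≤ travCost x y T :=
  csInf_le ⟨0, by rintro _ ⟨T, -, rfl⟩; exact travCost_nonneg x y T⟩ ⟨T, hT, rfl⟩

lemma exists_travCost_lt_of_dF_lt (hm : 1 ≤ m) (hℓ : 1 ≤ ℓ) {c : ℝ} (h : dF m ℓ x y < c) :
    ∃ T, IsTraversal m ℓ T ∧ travCost x y T < c := by
  have hne : {c | ∃ T, IsTraversal m ℓ T ∧ travCost x y T = c}.Nonempty :=
    ⟨_, _, isTraversal_diagTraversal hm hℓ, rfl⟩
  obtain ⟨_, ⟨T, hT, rfl⟩, hlt⟩ := exists_lt_of_csInf_lt hne h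
  exact ⟨T, hT, hlt⟩

lemma dF_le_of_forall_abs_sub_le (hm : 1 ≤ m) (hℓ : 1 ≤ ℓ) {B : ℝ} (hB : 0 ≤ B)
    (h : ∀ k ∈ Set.Icc 1 (max m ℓ), |x (min k m) - y (min k ℓ)| ≤ B) : dF m ℓ x y ≤ B := by
  refine (dF_le_travCost (isTraversal_diagTraversal hm hℓ)).trans (travCost_le hB ?_)
  simp only [diagTraversal, List.mem_map, List.mem_range]
  rintro _ ⟨i, hi, rfl⟩
  exact h (i + 1) ⟨by omega, by omega⟩

end dF

lemma abs_sub_add_ite_le (a b t : ℝ) :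
    |b - (a + if a ≤ b then t else -t)| ≤ max t (|a - b| - t) := by
  have := le_max_left t (|a - b| - t)
  have := le_max_right t (|a - b| - t)
  split_ifs with h
  · rw [abs_of_nonpos (sub_nonpos.mpr h)] at *
    exact abs_le.mpr ⟨by linarith, by linarith⟩
  · rw [abs_of_pos (sub_pos.mpr (not_le.mp h))] at *
    exact abs_le.mpr ⟨by linarith, by linarith⟩

lemma card_monotone_le_card_sym (n : ℕ) (α : Type*) [LinearOrder α] [Fintype α] :
    #({f : Fin n → α | Monotone f} : Finset (Fin n → α)) ≤ Fintype.card (Sym α n) := by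
  refine card_le_card_of_injOn (fun f => ⟨↑(List.ofFn f), by simp⟩)
    (fun _ _ => mem_univ _) fun f hf g hg hfg => ?_
  simp only [coe_filter, mem_univ, true_and, Set.mem_ofPred_eq] at hf hg
  have hperm : (List.ofFn f).Perm (List.ofFn g) :=
    Multiset.coe_eq_coe.mp (congrArg Subtype.val hfg)
  exact List.ofFn_injective (hperm.eq_of_sortedLE hf.sortedLE_ofFn hg.sortedLE_ofFn)

lemma card_monotone_fin_le (m : ℕ) :
    #({f : Fin m → Fin m | Monotone f} : Finset (Fin m → Fin m)) ≤ 4 ^ m := by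
  calc _ ≤ Fintype.card (Sym (Fin m) m) := card_monotone_le_card_sym m (Fin m)
    _ = (m + m - 1).choose m := by rw [Sym.card_sym_eq_choose, Fintype.card_fin]
    _ ≤ 2 ^ (m + m - 1) := Nat.choose_le_two_pow _ _
    _ ≤ 2 ^ (2 * m) := Nat.pow_le_pow_right two_pos (by omega)
    _ = 4 ^ m := by rw [pow_mul]; norm_num

/-- `f` and `s` are indexed from `0`, series from `1`; the value `0` outside `1 ≤ k ≤ m` is never
read. -/
noncomputable def coverCenter (x : ℕ → ℝ) (t : ℝ) {m : ℕ} (f : Fin m → Fin m)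
    (s : Fin m → Bool) : ℕ → ℝ :=
  fun k => if h : k - 1 < m then x (f ⟨k - 1, h⟩ + 1) + (if s ⟨k - 1, h⟩ then t else -t) else 0

noncomputable def coverCenters (x : ℕ → ℝ) (t : ℝ) (m : ℕ) : Finset (ℕ → ℝ) :=
  (({f | Monotone f} : Finset (Fin m → Fin m)) ×ˢ (univ : Finset (Fin m → Bool))).image
    fun fs => coverCenter x t fs.1 fs.2

lemma card_coverCenters_le (x : ℕ → ℝ) (t : ℝ) (m : ℕ) : #(coverCenters x t m) ≤ 8 ^ m :=
  calc _ ≤ #(({f | Monotone f} : Finset (Fin m → Fin m)) ×ˢ (univ : Finset (Fin m → Bool))) :=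
        card_image_le
    _ = #({f | Monotone f} : Finset (Fin m → Fin m)) * 2 ^ m := by simp
    _ ≤ 4 ^ m * 2 ^ m := Nat.mul_le_mul_right _ (card_monotone_fin_le m)
    _ = 8 ^ m := by rw [← mul_pow]; norm_num

lemma exists_mem_coverCenters_dF_le {m ℓ : ℕ} {x y : ℕ → ℝ} {T : List (ℕ × ℕ)} (t : ℝ)
    (hℓ : 1 ≤ ℓ) (hℓm : ℓ ≤ m) (hT : IsTraversal m ℓ T) :
    ∃ c ∈ coverCenters x t m, dF ℓ m y c ≤ max t (travCost x y T - t) := by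
  obtain ⟨I, hImono, hI⟩ := hT.exists_monotoneOn_matching
  have hJ : ∀ k, 1 ≤ k → min k ℓ ∈ Set.Icc 1 ℓ := fun k hk => ⟨by omega, by omega⟩
  have hIm : ∀ k, 1 ≤ k → I (min k ℓ) - 1 < m := fun k hk => by
    have := (Prod.mk_le_mk.mp (hT.mem_Icc (hI _ (hJ k hk))).2).1
    omega
  let f : Fin m → Fin m := fun i => ⟨I (min (i + 1) ℓ) - 1, hIm _ (by omega)⟩
  let s : Fin m → Bool := fun i => decide (x (I (min (i + 1) ℓ)) ≤ y (min (i + 1) ℓ))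
  have hf : Monotone f := fun i i' h => Nat.sub_le_sub_right
    (hImono (hJ _ (by omega)) (hJ _ (by omega)) (min_le_min_right ℓ (Nat.succ_le_succ h))) 1
  refine ⟨coverCenter x t f s, mem_image.mpr ⟨(f, s), by simpa using hf, rfl⟩, ?_⟩
  have hcost := travCost_nonneg x y T
  refine dF_le_of_forall_abs_sub_le hℓ (by omega)
    (by linarith [le_max_left t (travCost x y T - t), le_max_right t (travCost x y T - t)])
    fun k hk => ?_
  obtain ⟨hk1, hk2⟩ := hk
  have hkm : min k m = k := by omega
  have hc : coverCenter x t f s k =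
      x (I (min k ℓ)) + if x (I (min k ℓ)) ≤ y (min k ℓ) then t else -t := by
    have hIk := (Prod.mk_le_mk.mp (hT.mem_Icc (hI _ (hJ k hk1))).1).1
    simp [coverCenter, f, s, show k - 1 < m by omega, show k - 1 + 1 = k by omega,
      show I (min k ℓ) - 1 + 1 = I (min k ℓ) by omega]
  rw [hkm, hc]
  refine (abs_sub_add_ite_le _ _ t).trans (max_le_max le_rfl ?_)
  linarith [abs_sub_le_travCost (x := x) (y := y) (hI _ (hJ k hk1))]

lemma Finset.exists_le_of_forall_exists_le_add {α : Type*} {D : Finset α} {g : α → ℝ} {a : ℝ}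
    (h : ∀ ε > 0, ∃ c ∈ D, g c ≤ a + ε) : ∃ c ∈ D, g c ≤ a := by
  obtain ⟨c, hc, -⟩ := h 1 one_pos
  obtain ⟨c₀, hc₀, hmin⟩ := D.exists_min_image g ⟨c, hc⟩
  refine ⟨c₀, hc₀, le_of_forall_pos_le_add fun ε hε => ?_⟩
  obtain ⟨c, hc, hle⟩ := h ε hε
  exact (hmin c hc).trans hle

theorem stmt15_general (m : ℕ) (r : ℝ) (x : ℕ → ℝ) :
    ∃ D : Finset (ℕ → ℝ), D.card ≤ 8 ^ m ∧
      ∀ m' : ℕ, 1 ≤ m' → m' ≤ m → ∀ y : ℕ → ℝ,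
        dF m m' x y ≤ r → ∃ c ∈ D, dF m' m y c ≤ r / 2 := by
  refine ⟨coverCenters x (r / 2) m, card_coverCenters_le x (r / 2) m, ?_⟩
  intro m' hm' hm'm y hy
  refine Finset.exists_le_of_forall_exists_le_add fun ε hε => ?_
  obtain ⟨T, hT, hcost⟩ :=
    exists_travCost_lt_of_dF_lt (by omega) hm' (hy.trans_lt (lt_add_of_pos_right r hε))
  obtain ⟨c, hc, hdF⟩ := exists_mem_coverCenters_dF_le (y := y) (r / 2) hm' hm'm hT
  exact ⟨c, hc, hdF.trans (max_le (by linarith) (by linarith))⟩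

/-- Doubling upper bound: every discrete-Fréchet ball of radius r around a
series of complexity m can be covered by at most 8^m balls of radius r/2. -/
theorem stmt15 (m : ℕ) (hm : 1 ≤ m) (r : ℝ) (hr : 0 < r) (x : ℕ → ℝ) :
    ∃ D : Finset (ℕ → ℝ), D.card ≤ 8 ^ m ∧
      ∀ m' : ℕ, 1 ≤ m' → m' ≤ m → ∀ y : ℕ → ℝ,
        dF m m' x y ≤ r → ∃ c ∈ D, dF m' m y c ≤ r / 2 :=
  stmt15_general m r x
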